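/- Let κ be a regular uncountable cardinal and ⟨C_α | α < κ⟩ a C-sequence. For ordinals η < α < δ < β < κ, if λ(δ,β) = η and ρ₂(δ,β) = η_{δ,β}, then tr(α,β)(η_{α,β}) = δ, where for any ordinal η and pair (α,β), η_{α,β} := min{n < ω | η ∈ C_{Tr(α,β)(n)} or n = ρ₂(α,β)} + 1. -/

import Mathlib

open Cardinal Ordinal Set

noncomputable section

/-- The order type of a set of ordinals. -/
def otp (s : Set Ordinal) : Ordinal := Ordinal.type ((· < ·) : s → s → Prop)

/-- `a < b` for sets of ordinals: every element of `a` is below every element of `b`. -/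
def SetLT (a b : Set Ordinal.{0}) : Prop := ∀ α ∈ a, ∀ β ∈ b, α < β

/-- `A` is a pairwise disjoint subfamily of `[κ]^σ`:
a family of subsets of (ordinals below) `κ` of order type `σ`, pairwise disjoint. -/
def IsFamily (κ σ : Ordinal.{0}) (A : Set (Set Ordinal)) : Prop :=
  (∀ a ∈ A, a ⊆ Set.Iio κ ∧ otp a = Ordinal.lift.{1} σ) ∧ A.PairwiseDisjoint id

/-- Shelah's principle `Pr₁(κ, κ, θ, χ)`. -/
def Pr1 (κ θ χ : Cardinal.{0}) : Prop :=
  ∃ c : Ordinal → Ordinal → Ordinal,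
    (∀ α β : Ordinal, α < β → β < κ.ord → c α β < θ.ord) ∧
    ∀ σ : Ordinal, σ < χ.ord → ∀ A : Set (Set Ordinal),
      IsFamily κ.ord σ A → #A = Cardinal.lift.{1} κ →
      ∀ τ : Ordinal, τ < θ.ord →
        ∃ a ∈ A, ∃ b ∈ A, SetLT a b ∧ ∀ α ∈ a, ∀ β ∈ b, c α β = τ
/-- `D` is a club (closed unbounded set) in `κ`. -/
def ClubIn (D : Set Ordinal.{0}) (κ : Ordinal.{0}) : Prop :=
  D ⊆ Set.Iio κ ∧ (∀ α < κ, ∃ β ∈ D, α ≤ β) ∧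
    ∀ δ < κ, 0 < δ → (∀ γ < δ, ∃ x ∈ D, γ < x ∧ x < δ) → δ ∈ D

/-- `S` is a stationary subset of `κ`. -/
def StatIn (S : Set Ordinal.{0}) (κ : Ordinal.{0}) : Prop :=
  S ⊆ Set.Iio κ ∧ ∀ D : Set Ordinal, ClubIn D κ → (S ∩ D).Nonempty

/-- `δ` is an accumulation point belonging to `s`, i.e. `δ ∈ acc(s)`:
`δ ∈ s` and `sup(s ∩ δ) = δ > 0`. -/
def IsAccOf (s : Set Ordinal.{0}) (δ : Ordinal.{0}) : Prop :=
  δ ∈ s ∧ 0 < δ ∧ ∀ γ < δ, ∃ x ∈ s, γ < x ∧ x < δ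

/-- `C` is a C-sequence over `κ`: each `C α` is a closed subset of `α`
with `sup (C α) = sup α`. -/
def IsCSeq (κ : Ordinal.{0}) (C : Ordinal.{0} → Set Ordinal.{0}) : Prop :=
  (∀ α < κ, C α ⊆ Set.Iio α) ∧
  (∀ α < κ, ∀ δ, 0 < δ → δ < α → (∀ γ < δ, ∃ x ∈ C α, γ < x ∧ x < δ) → δ ∈ C α) ∧
  (∀ α < κ, ∀ γ : Ordinal, (∀ x ∈ C α, x ≤ γ) → ∀ δ < α, δ ≤ γ)

/-- The upper trace of the walk from `β` down to `α` along the C-sequence `C`. -/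
def Tr (C : Ordinal.{0} → Set Ordinal.{0}) (α β : Ordinal.{0}) : ℕ → Ordinal.{0}
  | 0 => β
  | n + 1 => if α < Tr C α β n then sInf (C (Tr C α β n) ∩ Set.Ici α) else α

/-- The length `ρ₂(α,β)` of the walk from `β` down to `α`. -/
def rho2 (C : Ordinal.{0} → Set Ordinal.{0}) (α β : Ordinal.{0}) : ℕ :=
  sInf {n | Tr C α β n = α}

/-- The (finite) trace `tr(α,β)` of the walk, as a list. -/
def trL (C : Ordinal.{0} → Set Ordinal.{0}) (α β : Ordinal.{0}) : List Ordinal.{0} :=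
  (List.range (rho2 C α β)).map (Tr C α β)

/-- `λ(α,β) = max_{i<ρ₂(α,β)} sup (C_{Tr(α,β)(i)} ∩ α)`. -/
def lamb (C : Ordinal.{0} → Set Ordinal.{0}) (α β : Ordinal.{0}) : Ordinal.{0} :=
  (Finset.range (rho2 C α β)).sup fun i => sSup (C (Tr C α β i) ∩ Set.Iio α)

/-- `η_{α,β} := min { n < ω ∣ η ∈ C_{Tr(α,β)(n)} or n = ρ₂(α,β) } + 1`. -/
def etaIdx (C : Ordinal.{0} → Set Ordinal.{0}) (η α β : Ordinal.{0}) : ℕ :=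
  sInf {n | η ∈ C (Tr C α β n) ∨ n = rho2 C α β} + 1

/-- The transformation principle `Pℓ₁(κ, θ, χ)`. -/
def Pl1 (κ θ χ : Cardinal.{0}) : Prop :=
  ∃ t : Ordinal.{0} → Ordinal.{0} → Ordinal.{0} × Ordinal.{0} × Ordinal.{0},
    (∀ α β : Ordinal, α < β → β < κ.ord →
      (t α β).1 ≤ (t α β).2.1 ∧ (t α β).2.1 ≤ α ∧ α < (t α β).2.2 ∧ (t α β).2.2 ≤ β) ∧
    ∀ σ : Ordinal, σ < χ.ord → ∀ A : Set (Set Ordinal),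
      IsFamily κ.ord σ A → #A = Cardinal.lift.{1} κ →
      ∃ S : Set Ordinal, StatIn S κ.ord ∧
        ∀ αs ∈ S, ∀ βs ∈ S, αs < βs →
          ∀ τ : Ordinal, τ < θ.ord → τ < αs →
            ∃ a ∈ A, ∃ b ∈ A, SetLT a b ∧
              ∀ α ∈ a, ∀ β ∈ b, t α β = (τ, αs, βs)

/-- The transformation principle `Pℓ₂(κ, Γ, χ)`. -/
def Pl2 (κ : Cardinal.{0}) (Γ : Set Ordinal.{0}) (χ : Cardinal.{0}) : Prop :=
  ∃ t : Ordinal.{0} → Ordinal.{0} → Ordinal.{0} × Ordinal.{0},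
    (∀ α β : Ordinal, α < β → β < κ.ord →
      (t α β).1 ≤ α ∧ α < (t α β).2 ∧ (t α β).2 ≤ β) ∧
    ∀ σ : Ordinal, σ < χ.ord → ∀ A : Set (Set Ordinal),
      IsFamily κ.ord σ A → #A = Cardinal.lift.{1} κ →
      ∃ D : Set Ordinal, ClubIn D κ.ord ∧
        ∀ αs ∈ Γ ∩ D, ∀ βs ∈ Γ ∩ D, αs < βs →
          ∃ a ∈ A, ∃ b ∈ A, SetLT a b ∧
            ∀ α ∈ a, ∀ β ∈ b, t α β = (αs, βs)

/-- The principle `Pr₁⁺(κ, θ, χ)`. -/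
def Pr1plus (κ θ χ : Cardinal.{0}) : Prop :=
  ∃ o : Ordinal.{0} → Ordinal.{0} → Ordinal.{0},
    (∀ α β : Ordinal, 0 < α → α < β → β < κ.ord → o α β < α ∧ o α β < θ.ord) ∧
    ∀ ζ : Ordinal, ζ < θ.ord → ∀ σ : Ordinal, σ < χ.ord →
      ∀ A : Set (Set Ordinal), IsFamily κ.ord σ A → #A = Cardinal.lift.{1} κ →
        ∃ γ < κ.ord, ∀ b : Set Ordinal,
          b ⊆ Set.Iio κ.ord → b ⊆ Set.Ici γ → otp b = Ordinal.lift.{1} σ →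
          ∃ a ∈ A, a ⊆ Set.Iio γ ∧ ∀ α ∈ a, ∀ β ∈ b, o α β = ζ

/-- The oscillation principle `Pℓ₆(κ, χ)`. -/
def Pl6 (κ χ : Cardinal.{0}) : Prop :=
  ∃ d : List Ordinal.{0} → ℕ,
    ∀ (u v : Ordinal.{0} → Set (List Ordinal.{0}))
      (s : Ordinal.{0} → List Ordinal.{0}) (φ : Ordinal.{0} → Ordinal.{0}),
      (∃ ε < κ.ord, ∀ α : Ordinal, ε ≤ α → α < κ.ord → φ α < α) →
      (∀ α < κ.ord, (u α).Nonempty ∧ #(u α) < Cardinal.lift.{1} χ ∧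
        ∀ ϱ ∈ u α, (∀ x ∈ ϱ, x < κ.ord) ∧ α ∈ ϱ) →
      (∀ α < κ.ord, (v α).Nonempty ∧ #(v α) < Cardinal.lift.{1} χ ∧
        ∀ σl ∈ v α, (∀ x ∈ σl, x < κ.ord) ∧ (s α ++ [α]) <+: σl) →
      ∃ α β : Ordinal, α < β ∧ β < κ.ord ∧ φ α = φ β ∧
        ∀ ϱ ∈ u α, ∀ σl ∈ v β, d (ϱ ++ σl) = ϱ.length

/-- Shelah's principle `Pr₆(κ, κ, θ, χ)`. -/
def Pr6 (κ θ χ : Cardinal.{0}) : Prop :=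
  ∃ d : List Ordinal.{0} → Ordinal.{0},
    (∀ l, d l < θ.ord) ∧
    ∀ τ : Ordinal, τ < θ.ord → ∀ E : Set Ordinal, ClubIn E κ.ord →
      ∀ u v : Ordinal.{0} → Set (List Ordinal.{0}),
        (∀ α ∈ E, (u α).Nonempty ∧ #(u α) < Cardinal.lift.{1} χ ∧
          ∀ ϱ ∈ u α, (∀ x ∈ ϱ, x < κ.ord) ∧ α ∈ ϱ) →
        (∀ α ∈ E, (v α).Nonempty ∧ #(v α) < Cardinal.lift.{1} χ ∧
          ∀ σl ∈ v α, (∀ x ∈ σl, x < κ.ord) ∧ α ∈ σl) →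
        ∃ α ∈ E, ∃ β ∈ E, α < β ∧
          ∀ ϱ ∈ u α, ∀ σl ∈ v β, d (ϱ ++ σl) = τ

/-- The square principle `□(κ)`. -/
def SquarePrin (κ : Ordinal.{0}) : Prop :=
  ∃ C : Ordinal.{0} → Set Ordinal.{0},
    (∀ α < κ, C α ⊆ Set.Iio α) ∧
    (∀ α < κ, Order.IsSuccLimit α →
      (∀ γ < α, ∃ x ∈ C α, γ < x) ∧
      (∀ δ < α, 0 < δ → (∀ γ < δ, ∃ x ∈ C α, γ < x ∧ x < δ) → δ ∈ C α)) ∧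
    (∀ α < κ, ∀ δ, IsAccOf (C α) δ → C α ∩ Set.Iio δ = C δ) ∧
    ¬ ∃ D : Set Ordinal, ClubIn D κ ∧ ∀ δ, IsAccOf D δ → D ∩ Set.Iio δ = C δ

/-- The stick principle `⫯(κ)` (with witnesses of size `μ`). -/
def Stick (κ μ : Cardinal.{0}) : Prop :=
  ∃ X : Ordinal.{0} → Set Ordinal.{0},
    (∀ γ < κ.ord, X γ ⊆ Set.Iio κ.ord) ∧
    ∀ Y : Set Ordinal, Y ⊆ Set.Iio κ.ord → #Y = Cardinal.lift.{1} κ →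
      ∃ γ < κ.ord, X γ ⊆ Y ∧ #(X γ) = Cardinal.lift.{1} μ

/-- A filter is `λ`-complete: it is closed under intersections of fewer than `λ` sets. -/
def FilterComplete (lam : Cardinal.{0}) {α : Type 1} (F : Filter α) : Prop :=
  ∀ ι : Type 1, #ι < Cardinal.lift.{1} lam →
    ∀ f : ι → Set α, (∀ i, f i ∈ F) → (⋂ i, f i) ∈ F

/-- `lam` is a strongly compact cardinal: every `lam`-complete (proper) filter
extends to a `lam`-complete ultrafilter. -/
def IsStronglyCompact (lam : Cardinal.{0}) : Prop :=
  ∀ (α : Type 1) (F : Filter α), F.NeBot → FilterComplete lam F →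
    ∃ U : Ultrafilter α, (↑U : Filter α) ≤ F ∧ FilterComplete lam (↑U : Filter α)

/-- `last(α,β)`: `α` if `λ(α,β) < α`, and otherwise `min(im(tr(α,β)))`. -/
def lastStep (C : Ordinal.{0} → Set Ordinal.{0}) (α β : Ordinal.{0}) : Ordinal.{0} :=
  if lamb C α β < α then α else sInf {x | ∃ i < rho2 C α β, Tr C α β i = x}


/-!
Since `λ(δ,β) = η < α`, no `C_{Tr(δ,β)(i)}` with `i < ρ₂(δ,β)` has points in `[α,δ)`, so the walk
from `β` to `α` follows the walk from `β` to `δ` step by step until it reaches `δ`. Both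
`η_{α,β}` and `η_{δ,β}` are then determined by this common initial segment, because
`ρ₂(δ,β) = η_{δ,β}` says that `η` is caught before the walk reaches `δ`. Hence
`η_{α,β} = ρ₂(δ,β)`, and at that step the walk to `α` is at `δ`.
-/

theorem Nat.sInf_eq_sInf_of_forall_lt_mem_iff {s t : Set ℕ} {m : ℕ}
    (hst : ∀ n < m, n ∈ s ↔ n ∈ t) (ht : t.Nonempty) (hm : sInf t < m) : sInf s = sInf t := by
  have hts : sInf t ∈ s := (hst _ hm).2 (Nat.sInf_mem ht)
  have hle : sInf s ≤ sInf t := Nat.sInf_le hts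
  exact hle.antisymm (Nat.sInf_le ((hst _ (hle.trans_lt hm)).1 (Nat.sInf_mem ⟨_, hts⟩)))

theorem Set.inter_Ici_eq_of_sSup_inter_Iio_lt {X : Type*} [ConditionallyCompleteLinearOrder X]
    {s : Set X} {a b : X} (hs : sSup (s ∩ Iio b) < a) (hab : a ≤ b) :
    s ∩ Ici a = s ∩ Ici b := by
  ext x
  refine ⟨fun ⟨hx, hax⟩ => ⟨hx, not_lt.1 fun hxb => ?_⟩, fun ⟨hx, hbx⟩ => ⟨hx, hab.trans hbx⟩⟩
  have hx_le : x ≤ sSup (s ∩ Iio b) := le_csSup ⟨b, fun y hy => hy.2.le⟩ ⟨hx, hxb⟩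
  exact (hx_le.trans_lt hs).not_ge hax

section Walks

variable {κ : Ordinal.{0}} {C : Ordinal.{0} → Set Ordinal.{0}} {α δ β : Ordinal.{0}} {n : ℕ}

theorem IsCSeq.inter_Ici_nonempty (hC : IsCSeq κ C) {t : Ordinal} (hδ : 0 < δ) (hδt : δ < t)
    (ht : t < κ) : (C t ∩ Ici δ).Nonempty := by
  by_contra hempty
  have hlt : ∀ x ∈ C t, x < δ := fun x hx => not_le.1 fun hδx => hempty ⟨x, hx, hδx⟩
  have hbdd : BddAbove (C t) := ⟨δ, fun x hx => (hlt x hx).le⟩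
  have hsup : δ ≤ sSup (C t) := hC.2.2 t ht _ (fun x hx => le_csSup hbdd hx) δ hδt
  have hcofinal : ∀ γ < δ, ∃ x ∈ C t, γ < x ∧ x < δ := fun γ hγ =>
    let ⟨x, hx, hγx⟩ := exists_lt_of_lt_csSup' (hγ.trans_le hsup)
    ⟨x, hx, hγx, hlt x hx⟩
  exact (hlt δ (hC.2.1 t ht δ hδ hδt hcofinal)).false

theorem Tr_succ_of_lt (h : α < Tr C α β n) :
    Tr C α β (n + 1) = sInf (C (Tr C α β n) ∩ Ici α) := by
  rw [Tr, if_pos h]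

theorem Tr_succ_of_not_lt (h : ¬α < Tr C α β n) : Tr C α β (n + 1) = α := by
  rw [Tr, if_neg h]

theorem Tr_succ_mem_of_lt (hC : IsCSeq κ C) (hα : 0 < α) (hTr : Tr C α β n < κ)
    (h : α < Tr C α β n) :
    Tr C α β (n + 1) ∈ C (Tr C α β n) ∧ α ≤ Tr C α β (n + 1) := by
  rw [Tr_succ_of_lt h]
  exact csInf_mem (hC.inter_Ici_nonempty hα h hTr)

theorem Tr_mem_Icc (hC : IsCSeq κ C) (hα : 0 < α) (hαβ : α ≤ β) (hβ : β < κ) :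
    ∀ n, Tr C α β n ∈ Icc α β
  | 0 => ⟨hαβ, le_rfl⟩
  | n + 1 => by
    have ih := Tr_mem_Icc hC hα hαβ hβ n
    by_cases h : α < Tr C α β n
    · obtain ⟨hmem, hle⟩ := Tr_succ_mem_of_lt hC hα (ih.2.trans_lt hβ) h
      exact ⟨hle, (hC.1 _ (ih.2.trans_lt hβ) hmem).le.trans ih.2⟩
    · rw [Tr_succ_of_not_lt h]
      exact ⟨le_rfl, hαβ⟩

theorem exists_Tr_eq (hC : IsCSeq κ C) (hα : 0 < α) (hαβ : α ≤ β) (hβ : β < κ) :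
    ∃ n, Tr C α β n = α := by
  obtain ⟨n, hn⟩ := WellFounded.not_rel_apply_succ (r := (· < ·)) (Tr C α β)
  have hmem := Tr_mem_Icc hC hα hαβ hβ
  refine ⟨n, le_antisymm (not_lt.1 fun h => hn ?_) (hmem n).1⟩
  exact hC.1 _ ((hmem n).2.trans_lt hβ) (Tr_succ_mem_of_lt hC hα ((hmem n).2.trans_lt hβ) h).1

theorem Tr_rho2 (hC : IsCSeq κ C) (hα : 0 < α) (hαβ : α ≤ β) (hβ : β < κ) :
    Tr C α β (rho2 C α β) = α :=
  Nat.sInf_mem (exists_Tr_eq hC hα hαβ hβ)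

theorem lt_Tr_of_lt_rho2 (hC : IsCSeq κ C) (hα : 0 < α) (hαβ : α ≤ β) (hβ : β < κ)
    (hn : n < rho2 C α β) : α < Tr C α β n :=
  ((Tr_mem_Icc hC hα hαβ hβ n).1).lt_of_ne' (Nat.notMem_of_lt_sInf hn)

theorem sSup_inter_Iio_le_lamb (hn : n < rho2 C α β) :
    sSup (C (Tr C α β n) ∩ Iio α) ≤ lamb C α β :=
  Finset.le_sup (f := fun i => sSup (C (Tr C α β i) ∩ Iio α)) (Finset.mem_range.2 hn)

theorem Tr_eq_Tr_of_lamb_lt (hC : IsCSeq κ C) (hlamb : lamb C δ β < α) (hαδ : α ≤ δ)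
    (hδβ : δ ≤ β) (hβ : β < κ) : ∀ n ≤ rho2 C δ β, Tr C α β n = Tr C δ β n
  | 0, _ => rfl
  | n + 1, hn => by
    have hn' : n < rho2 C δ β := hn
    have ih := Tr_eq_Tr_of_lamb_lt hC hlamb hαδ hδβ hβ n hn'.le
    have hδ : δ < Tr C δ β n :=
      lt_Tr_of_lt_rho2 hC (pos_of_gt (hlamb.trans_le hαδ)) hδβ hβ hn'
    rw [Tr_succ_of_lt (ih ▸ hαδ.trans_lt hδ), Tr_succ_of_lt hδ, ih,
      Set.inter_Ici_eq_of_sSup_inter_Iio_lt ((sSup_inter_Iio_le_lamb hn').trans_lt hlamb) hαδ]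

theorem rho2_le_rho2_of_lamb_lt (hC : IsCSeq κ C) (hlamb : lamb C δ β < α) (hαδ : α ≤ δ)
    (hδβ : δ ≤ β) (hβ : β < κ) : rho2 C δ β ≤ rho2 C α β := by
  have hα : 0 < α := pos_of_gt hlamb
  by_contra! hlt
  have hTr := Tr_eq_Tr_of_lamb_lt hC hlamb hαδ hδβ hβ _ hlt.le
  rw [Tr_rho2 hC hα (hαδ.trans hδβ) hβ] at hTr
  exact (hαδ.trans_lt (hTr ▸ lt_Tr_of_lt_rho2 hC (hα.trans_le hαδ) hδβ hβ hlt)).false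

theorem etaIdx_eq_of_Tr_eq {η : Ordinal} (hTr : ∀ n < rho2 C δ β, Tr C α β n = Tr C δ β n)
    (hρ : rho2 C δ β ≤ rho2 C α β) (hη : rho2 C δ β = etaIdx C η δ β) :
    etaIdx C η α β = etaIdx C η δ β := by
  unfold etaIdx at hη ⊢
  congr 1
  refine Nat.sInf_eq_sInf_of_forall_lt_mem_iff (m := rho2 C δ β) (fun n hn => ?_)
    ⟨_, Or.inr rfl⟩ (by omega)
  simp only [mem_ofPred_eq, hTr n hn, (hn.trans_le hρ).ne, hn.ne]

end Walks

theorem walk_etaIdx_general (κ : Cardinal.{0})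
    (C : Ordinal.{0} → Set Ordinal.{0}) (hC : IsCSeq κ.ord C)
    (η α δ β : Ordinal) (h0 : η < α) (h1 : α < δ) (h2 : δ < β) (h3 : β < κ.ord)
    (h4 : lamb C δ β = η) (h5 : rho2 C δ β = etaIdx C η δ β) :
    Tr C α β (etaIdx C η α β) = δ := by
  have hlamb : lamb C δ β < α := h4 ▸ h0
  have hTr := Tr_eq_Tr_of_lamb_lt hC hlamb h1.le h2.le h3
  have hρ := rho2_le_rho2_of_lamb_lt hC hlamb h1.le h2.le h3
  have hη : etaIdx C η α β = rho2 C δ β :=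
    (etaIdx_eq_of_Tr_eq (fun n hn => hTr n hn.le) hρ h5).trans h5.symm
  rw [hη, hTr _ le_rfl, Tr_rho2 hC (pos_of_gt (hlamb.trans h1)) h2.le h3]

/-- If `η < α < δ < β < κ`, `λ(δ,β) = η` and `ρ₂(δ,β) = η_{δ,β}`,
then `tr(α,β)(η_{α,β}) = δ`. -/
theorem walk_etaIdx (κ : Cardinal.{0}) (hreg : κ.IsRegular) (hκ : ℵ₀ < κ)
    (C : Ordinal.{0} → Set Ordinal.{0}) (hC : IsCSeq κ.ord C)
    (η α δ β : Ordinal) (h0 : η < α) (h1 : α < δ) (h2 : δ < β) (h3 : β < κ.ord)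
    (h4 : lamb C δ β = η) (h5 : rho2 C δ β = etaIdx C η δ β) :
    Tr C α β (etaIdx C η α β) = δ :=
  walk_etaIdx_general κ C hC η α δ β h0 h1 h2 h3 h4 h5

end
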